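/- Let P be an n×l binary matrix, θ a real angle, and s ∈ F₂ˡ. Then Σ_{x ∈ F₂ˡ : x·s = 0} ℙ[X=x] = 2^{−r_s} · Σ_{c∈C(P_s)} cos( θ·(n_s − 2|c|) )², where P_s is the affinification of P by s, n_s its number of rows, and r_s the rank of C(P_s). -/

import Mathlib

/-!
Write `ℙ[X = x] = 4⁻ˡ |f̂(x)|²`, where `f̂` is the Walsh–Hadamard transform of the phase
`f(a) = exp(iθ Σⱼ (-1)^{Pⱼ·a})`. Since `1 + (-1)^{x·s}` is twice the indicator of `x·s = 0`,
character orthogonality gives `Σ_{x·s=0} |f̂(x)|² = 2^{l-1} Σₐ (1 + Re (f(a) · conj f(a+s)))`.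
Replacing `a` by `a + s` flips exactly the signs of the rows of `P_s`, so
`Re (f(a) · conj f(a+s)) = cos(2θ(n_s − 2|P_s a|))`, and `1 + cos 2y = 2 cos² y`.
Finally `a ↦ P_s a` is `2^{l − r_s}`-to-one onto `C(P_s)`.
-/

open Matrix BigOperators Finset

noncomputable section

/-- The binary code generated by the columns of `P`: all vectors `P·s`. -/
def code {m : Type*} [Fintype m] {l : ℕ} (P : Matrix m (Fin l) (ZMod 2)) :
    Finset (m → ZMod 2) :=
  Finset.image P.mulVec Finset.univ

/-- Rank function of the binary matroid of `P`: the F₂-rank of the submatrix of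
rows indexed by `X`. -/
def rho {m : Type*} [Fintype m] {l : ℕ} (P : Matrix m (Fin l) (ZMod 2)) (X : Finset m) : ℕ :=
  (P.submatrix (fun i : {i // i ∈ X} => (i : m)) id).rank

/-- Tutte polynomial of the binary matroid of `P`. -/
def tutte {m : Type*} [Fintype m] {l : ℕ} (P : Matrix m (Fin l) (ZMod 2)) (x y : ℂ) : ℂ :=
  ∑ X ∈ (Finset.univ : Finset m).powerset,
    (x - 1) ^ (rho P Finset.univ - rho P X) * (y - 1) ^ (X.card - rho P X)

/-- Normalised weight enumerator. -/
def alpha {m : Type*} [Fintype m] {l : ℕ} (P : Matrix m (Fin l) (ZMod 2)) (θ : ℝ) : ℂ :=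
  (2 : ℂ) ^ (-(P.rank : ℤ)) *
    ∑ c ∈ code P, Complex.exp (Complex.I * θ * ((Fintype.card m : ℂ) - 2 * (hammingNorm c : ℂ)))

/-- The IQP probability distribution of an X-program `(P, θ)`. -/
def iqpProb {n l : ℕ} (P : Matrix (Fin n) (Fin l) (ZMod 2)) (θ : ℝ) (x : Fin l → ZMod 2) : ℝ :=
  ‖(2 : ℂ) ^ (-(l : ℤ)) *
    ∑ a : Fin l → ZMod 2, (-1 : ℂ) ^ (x ⬝ᵥ a).val *
      Complex.exp (Complex.I * θ * ∑ j, (-1 : ℂ) ^ ((P j) ⬝ᵥ a).val)‖ ^ 2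

/-- Affinification: the submatrix of rows `P_j` with `P_j ⬝ s = 1`. -/
def affin {n l : ℕ} (P : Matrix (Fin n) (Fin l) (ZMod 2)) (s : Fin l → ZMod 2) :
    Matrix {j : Fin n // (P j) ⬝ᵥ s = 1} (Fin l) (ZMod 2) :=
  Matrix.of fun j k => P j.1 k


open ComplexConjugate

lemma zmod_two_eq_zero_or_eq_one (u : ZMod 2) : u = 0 ∨ u = 1 := by
  revert u; decide

lemma neg_one_pow_val_add {R : Type*} [CommRing R] (u v : ZMod 2) :
    (-1 : R) ^ (u + v).val = (-1) ^ u.val * (-1) ^ v.val :=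
  (AddChar.zmodChar 2 (neg_one_sq (R := R))).map_add_eq_mul u v

lemma add_add_eq_zero_iff_eq_add {ι : Type*} (t a b : ι → ZMod 2) :
    t + a + b = 0 ↔ b = a + t := by
  rw [add_eq_zero_iff_eq_neg', add_comm t,
    show -(a + t) = a + t from funext fun _ => ZMod.neg_eq_self_mod_two _]

lemma two_mul_sum_filter_eq_zero {α R : Type*} [Fintype α] [CommRing R] (p : α → ZMod 2)
    (F : α → R) :
    2 * ∑ x ∈ univ.filter (fun x => p x = 0), F x = ∑ x, (1 + (-1) ^ (p x).val) * F x := by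
  rw [Finset.sum_filter, Finset.mul_sum]
  refine Finset.sum_congr rfl fun x _ => ?_
  rcases zmod_two_eq_zero_or_eq_one (p x) with h | h <;> norm_num [h, ZMod.val_one, two_mul]

section SignSums

variable {m R : Type*} [Fintype m] [CommRing R]

lemma sum_neg_one_pow_val (w : m → ZMod 2) :
    ∑ j, (-1 : R) ^ (w j).val = Fintype.card m - 2 * hammingNorm w := by
  have h (j) : (-1 : R) ^ (w j).val = 1 - 2 * if w j ≠ 0 then 1 else 0 := by
    rcases zmod_two_eq_zero_or_eq_one (w j) with h | h <;> norm_num [h, ZMod.val_one]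
  simp_rw [h, Finset.sum_sub_distrib, ← Finset.mul_sum, Finset.sum_boole]
  simp [hammingNorm]

lemma sum_neg_one_pow_val_sub_add (w v : m → ZMod 2) :
    ∑ j, (-1 : R) ^ (w j).val - ∑ j, (-1 : R) ^ ((w + v) j).val =
      2 * ∑ j : {j // v j = 1}, (-1 : R) ^ (w j).val := by
  have h (j) : (-1 : R) ^ (w j).val - (-1) ^ ((w + v) j).val =
      if v j = 1 then 2 * (-1 : R) ^ (w j).val else 0 := by
    rcases zmod_two_eq_zero_or_eq_one (v j) with h | h <;>
      norm_num [h, neg_one_pow_val_add, ZMod.val_one, two_mul]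
  rw [← Finset.sum_sub_distrib, Finset.sum_congr rfl fun j _ => h j, ← Finset.sum_filter,
    Finset.mul_sum]
  exact Finset.sum_subtype _ (by simp) _

end SignSums

section WalshTransform

variable {ι : Type*} [Fintype ι] [DecidableEq ι]

def dotProductChar (c : ι → ZMod 2) : AddChar (ι → ZMod 2) ℂ :=
  (AddChar.zmodChar 2 (neg_one_sq (R := ℂ))).compAddMonoidHom
    (AddMonoidHom.mk' (· ⬝ᵥ c) fun x y => add_dotProduct x y c)

lemma dotProductChar_eq_zero_iff {c : ι → ZMod 2} : dotProductChar c = 0 ↔ c = 0 := by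
  refine ⟨fun h => funext fun k => ?_, by rintro rfl; ext x; simp [dotProductChar]⟩
  have := AddChar.eq_zero_iff.1 h (Pi.single k 1)
  simp only [dotProductChar, AddChar.compAddMonoidHom_apply, AddMonoidHom.mk'_apply,
    single_dotProduct, one_mul, AddChar.zmodChar_apply] at this
  rw [neg_one_pow_eq_one_iff_even (by norm_num)] at this
  rw [Pi.zero_apply, ← ZMod.natCast_zmod_val (c k)]
  exact ZMod.natCast_eq_zero_iff_even.2 this

lemma sum_neg_one_pow_dotProduct (c : ι → ZMod 2) :
    ∑ x : ι → ZMod 2, (-1 : ℂ) ^ (x ⬝ᵥ c).val = if c = 0 then 2 ^ Fintype.card ι else 0 := by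
  classical
  have := (dotProductChar c).sum_eq_ite
  simp only [dotProductChar_eq_zero_iff] at this
  simpa [dotProductChar, AddChar.zmodChar_apply] using this

def walshTransform (f : (ι → ZMod 2) → ℂ) (x : ι → ZMod 2) : ℂ :=
  ∑ a, (-1 : ℂ) ^ (x ⬝ᵥ a).val * f a

lemma sum_neg_one_pow_mul_walshTransform_mul_conj (f : (ι → ZMod 2) → ℂ) (t : ι → ZMod 2) :
    ∑ x, (-1 : ℂ) ^ (x ⬝ᵥ t).val * (walshTransform f x * conj (walshTransform f x)) =
      2 ^ Fintype.card ι * ∑ a, f a * conj (f (a + t)) := by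
  have hconj (x) : conj (walshTransform f x) = ∑ b, (-1 : ℂ) ^ (x ⬝ᵥ b).val * conj (f b) := by
    simp [walshTransform, map_sum]
  calc ∑ x, (-1 : ℂ) ^ (x ⬝ᵥ t).val * (walshTransform f x * conj (walshTransform f x))
      = ∑ a, ∑ b, (∑ x, (-1 : ℂ) ^ (x ⬝ᵥ (t + a + b)).val) * (f a * conj (f b)) := by
        simp_rw [hconj, walshTransform, Finset.sum_mul_sum, Finset.mul_sum, Finset.sum_mul,
          dotProduct_add, neg_one_pow_val_add]
        rw [Finset.sum_comm]
        refine Finset.sum_congr rfl fun a _ => ?_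
        rw [Finset.sum_comm]
        refine Finset.sum_congr rfl fun b _ => Finset.sum_congr rfl fun x _ => by ring
    _ = ∑ a, 2 ^ Fintype.card ι * (f a * conj (f (a + t))) := by
        simp_rw [sum_neg_one_pow_dotProduct, add_add_eq_zero_iff_eq_add, ite_mul, zero_mul,
          Finset.sum_ite_eq']
        simp
    _ = 2 ^ Fintype.card ι * ∑ a, f a * conj (f (a + t)) := (Finset.mul_sum ..).symm

lemma two_mul_sum_filter_norm_sq_walshTransform {f : (ι → ZMod 2) → ℂ} (hf : ∀ a, ‖f a‖ = 1)
    (s : ι → ZMod 2) :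
    2 * ∑ x ∈ univ.filter (fun x => x ⬝ᵥ s = 0), ‖walshTransform f x‖ ^ 2 =
      2 ^ Fintype.card ι * ∑ a, (1 + (f a * conj (f (a + s))).re) := by
  have hparseval : ∑ x, walshTransform f x * conj (walshTransform f x) =
      2 ^ Fintype.card ι * ∑ _a : ι → ZMod 2, (1 : ℂ) := by
    simpa [Complex.mul_conj', hf] using sum_neg_one_pow_mul_walshTransform_mul_conj f 0
  have hcomplex : 2 * ∑ x ∈ univ.filter (fun x => x ⬝ᵥ s = 0),
      walshTransform f x * conj (walshTransform f x) =
        2 ^ Fintype.card ι * ∑ a, (1 + f a * conj (f (a + s))) := by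
    rw [two_mul_sum_filter_eq_zero (· ⬝ᵥ s), Finset.sum_add_distrib, mul_add]
    simp_rw [add_mul, one_mul, Finset.sum_add_distrib]
    rw [sum_neg_one_pow_mul_walshTransform_mul_conj, hparseval]
  have := congrArg Complex.re hcomplex
  rw [show (2 : ℂ) ^ Fintype.card ι = ((2 ^ Fintype.card ι : ℝ) : ℂ) by push_cast; rfl,
    Complex.re_ofReal_mul] at this
  simpa [Complex.mul_conj', ← Complex.ofReal_pow] using this

end WalshTransform

section Code

variable {m : Type*} [Fintype m] {l : ℕ}

lemma card_code (Q : Matrix m (Fin l) (ZMod 2)) : #(code Q) = 2 ^ Q.rank := by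
  have : #(code Q) = Nat.card (LinearMap.range Q.mulVecLin) := by
    rw [code, ← Set.toFinset_range, Set.toFinset_card, ← Nat.card_eq_fintype_card]
    rfl
  rw [this, Module.natCard_eq_pow_finrank (K := ZMod 2), Nat.card_zmod]
  rfl

lemma sum_mulVec_eq_card_ker_smul {M : Type*} [AddCommMonoid M]
    (Q : Matrix m (Fin l) (ZMod 2)) (F : (m → ZMod 2) → M) :
    ∑ a, F (Q *ᵥ a) = #{a | Q *ᵥ a = 0} • ∑ c ∈ code Q, F c := by
  rw [Finset.sum_comp, code, Finset.smul_sum]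
  refine Finset.sum_congr rfl fun c hc => ?_
  obtain ⟨a, -, rfl⟩ := Finset.mem_image.1 hc
  congr 1
  exact AddMonoidHom.card_fiber_eq_of_mem_range Q.mulVecLin.toAddMonoidHom ⟨a, rfl⟩ ⟨0, map_zero _⟩

lemma two_pow_rank_mul_sum_mulVec {R : Type*} [CommSemiring R]
    (Q : Matrix m (Fin l) (ZMod 2)) (F : (m → ZMod 2) → R) :
    2 ^ Q.rank * ∑ a, F (Q *ᵥ a) = 2 ^ l * ∑ c ∈ code Q, F c := by
  have hcard : 2 ^ l = #{a | Q *ᵥ a = 0} * 2 ^ Q.rank := by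
    simpa [card_code] using sum_mulVec_eq_card_ker_smul Q (fun _ => (1 : ℕ))
  rw [sum_mulVec_eq_card_ker_smul, nsmul_eq_mul, ← mul_assoc]
  congr 1
  have := congrArg (Nat.cast : ℕ → R) hcard
  push_cast at this
  rw [this, mul_comm]

end Code

section Phase

variable {m ι : Type*} [Fintype m] [Fintype ι]

def iqpPhase (P : Matrix m ι (ZMod 2)) (θ : ℝ) (a : ι → ZMod 2) : ℂ :=
  Complex.exp (Complex.I * θ * ∑ j, (-1 : ℂ) ^ ((P j) ⬝ᵥ a).val)

lemma iqpPhase_eq (P : Matrix m ι (ZMod 2)) (θ : ℝ) (a : ι → ZMod 2) :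
    iqpPhase P θ a = Complex.exp ((θ * ∑ j, (-1 : ℝ) ^ ((P *ᵥ a) j).val : ℝ) * Complex.I) := by
  rw [iqpPhase]
  congr 1
  push_cast [mulVec]
  ring

lemma norm_iqpPhase (P : Matrix m ι (ZMod 2)) (θ : ℝ) (a : ι → ZMod 2) :
    ‖iqpPhase P θ a‖ = 1 := by
  rw [iqpPhase_eq, Complex.norm_exp_ofReal_mul_I]

lemma iqpPhase_mul_conj (P : Matrix m ι (ZMod 2)) (θ : ℝ) (a b : ι → ZMod 2) :
    iqpPhase P θ a * conj (iqpPhase P θ b) = Complex.exp ((θ * (∑ j, (-1 : ℝ) ^ ((P *ᵥ a) j).val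
      - ∑ j, (-1 : ℝ) ^ ((P *ᵥ b) j).val) : ℝ) * Complex.I) := by
  rw [iqpPhase_eq, iqpPhase_eq, ← Complex.exp_conj, ← Complex.exp_add]
  congr 1
  simp only [map_mul, Complex.conj_ofReal, Complex.conj_I]
  push_cast
  ring

end Phase

lemma iqpProb_eq {n l : ℕ} (P : Matrix (Fin n) (Fin l) (ZMod 2)) (θ : ℝ) (x : Fin l → ZMod 2) :
    iqpProb P θ x = ((2 : ℝ) ^ l)⁻¹ ^ 2 * ‖walshTransform (iqpPhase P θ) x‖ ^ 2 := by
  rw [iqpProb, norm_mul, mul_pow, norm_zpow, Complex.norm_two, _root_.zpow_neg, zpow_natCast]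
  rfl

lemma one_add_re_iqpPhase_mul_conj_add {n l : ℕ} (P : Matrix (Fin n) (Fin l) (ZMod 2)) (θ : ℝ)
    (a s : Fin l → ZMod 2) :
    1 + (iqpPhase P θ a * conj (iqpPhase P θ (a + s))).re =
      2 * Real.cos (θ * ((Fintype.card {j : Fin n // (P j) ⬝ᵥ s = 1} : ℝ) -
        2 * (hammingNorm (affin P s *ᵥ a) : ℝ))) ^ 2 := by
  have hdiff : ∑ j, (-1 : ℝ) ^ ((P *ᵥ a) j).val - ∑ j, (-1 : ℝ) ^ ((P *ᵥ (a + s)) j).val =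
      2 * ∑ j, (-1 : ℝ) ^ ((affin P s *ᵥ a) j).val := by
    rw [mulVec_add]
    -- `affin P s *ᵥ a` is definitionally `P *ᵥ a` restricted to the rows `j` with `P j ⬝ᵥ s = 1`
    exact sum_neg_one_pow_val_sub_add _ _
  rw [iqpPhase_mul_conj, hdiff, sum_neg_one_pow_val, mul_left_comm, Complex.exp_ofReal_mul_I_re,
    Real.cos_two_mul]
  ring

/-- `Σ_{x : x·s=0} ℙ[X=x] = 2^{−r_s} · Σ_{c∈C(P_s)} cos(θ(n_s−2|c|))²`. -/
theorem prob_parity_eq_cos_sq {n l : ℕ} (P : Matrix (Fin n) (Fin l) (ZMod 2)) (θ : ℝ)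
    (s : Fin l → ZMod 2) :
    ∑ x ∈ Finset.univ.filter (fun x : Fin l → ZMod 2 => x ⬝ᵥ s = 0), iqpProb P θ x =
      (2 : ℝ) ^ (-((affin P s).rank : ℤ)) *
        ∑ c ∈ code (affin P s),
          Real.cos (θ * ((Fintype.card {j : Fin n // (P j) ⬝ᵥ s = 1} : ℝ) -
            2 * (hammingNorm c : ℝ))) ^ 2 := by
  have hwalsh := two_mul_sum_filter_norm_sq_walshTransform (norm_iqpPhase P θ) s
  simp_rw [one_add_re_iqpPhase_mul_conj_add, ← Finset.mul_sum, Fintype.card_fin] at hwalsh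
  have hfiber := two_pow_rank_mul_sum_mulVec (affin P s) fun c =>
    Real.cos (θ * ((Fintype.card {j : Fin n // (P j) ⬝ᵥ s = 1} : ℝ) - 2 * (hammingNorm c : ℝ))) ^ 2
  simp_rw [iqpProb_eq, ← Finset.mul_sum, _root_.zpow_neg, zpow_natCast]
  field_simp
  linear_combination (2 ^ (affin P s).rank / 2 : ℝ) * hwalsh + (2 ^ l : ℝ) * hfiber

end
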